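/- arXiv:1604.08179 — 3 statements merged into one kernel-verified Lean document; each statement's English description precedes it below -/
import Mathlib

section
/- In every pairwise-stable connected graph G on V, for every pair of distinct nodes i, j ∈ T_A, the distance satisfies d_G(i,j) ≤ √((1−2A)² + 4·c_A) − 2(A−1). -/
/-!
If `i, j ∈ T_A` are at distance `d ≥ 2`, stability says that one of them, say `i`, does not
profit from the link `ij`. The link costs `c_A`; in exchange it brings the vertex at position `t`
of a geodesic from `i` to `j` from distance `t` to distance at most `d - t + 1`, and `j` itself
(weighted by `A`) from `d` to `1`. Hence `c_A > (A - 1)(d - 1) + ∑ₜ (2t - d - 1)⁺`, and the sum is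
at least `(d² - 1)/4`; the resulting quadratic inequality in `d` is the claimed bound.
-/

open SimpleGraph Classical
open scoped ENNReal

noncomputable section

variable {V : Type*} [Fintype V] [DecidableEq V]

/-- The degree of node `i` in `G`. -/
def degE (G : SimpleGraph V) (i : V) : ℕ := (G.neighborSet i).ncard

/-- The hop distance between `i` and `j`, with value `+∞` for unreachable pairs. -/
def dE (G : SimpleGraph V) (i j : V) : ℝ≥0∞ :=
  if G.Reachable i j then (G.dist i j : ℝ≥0∞) else ⊤

/-- Basic model: the cost of node `i`, where a node of type A (in `TA`) pays link
cost `cA`, a node of type B (not in `TA`) pays `cB`, distances to type-A nodes are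
weighted by `A` and to type-B nodes by `1`. -/
def cost (TA : Finset V) (A cA cB : ℝ) (G : SimpleGraph V) (i : V) : ℝ≥0∞ :=
  (degE G i : ℝ≥0∞) * ENNReal.ofReal (if i ∈ TA then cA else cB)
    + ENNReal.ofReal A * ∑ j ∈ TA, dE G i j
    + ∑ j ∈ TAᶜ, dE G i j

/-- `G` with the edge `ij` removed. -/
def delE (G : SimpleGraph V) (i j : V) : SimpleGraph V := G.deleteEdges {s(i, j)}

/-- `G` with the edge `ij` added. -/
def addE (G : SimpleGraph V) (i j : V) : SimpleGraph V := G ⊔ edge i j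

/-- Pairwise stability: removing any present edge strictly increases the cost of both
endpoints, and adding any absent edge strictly increases the cost of at least one
endpoint. -/
def PairwiseStable (TA : Finset V) (A cA cB : ℝ) (G : SimpleGraph V) : Prop :=
  (∀ i j : V, G.Adj i j →
    cost TA A cA cB G i < cost TA A cA cB (delE G i j) i ∧
    cost TA A cA cB G j < cost TA A cA cB (delE G i j) j) ∧
  (∀ i j : V, i ≠ j → ¬ G.Adj i j →
    cost TA A cA cB G i < cost TA A cA cB (addE G i j) i ∨
    cost TA A cA cB G j < cost TA A cA cB (addE G i j) j)

/-- A lower bound for the total decrease of the distances from `u` to the vertices of a geodesic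
of length `d` from `u` to `v` when the edge `uv` is added: the vertex at position `t` gets closer
by at least `2t - (d + 1)`. -/
def shortcutSaving (d : ℕ) : ℕ := ∑ t ∈ Finset.range (d + 1), (2 * t - (d + 1))

lemma shortcutSaving_add_two (d : ℕ) : shortcutSaving (d + 2) = shortcutSaving d + (d + 1) := by
  unfold shortcutSaving
  rw [Finset.sum_range_succ, Finset.sum_range_succ',
    Finset.sum_congr rfl fun t _ => show 2 * (t + 1) - (d + 2 + 1) = 2 * t - (d + 1) by omega]
  omega

lemma sq_le_four_mul_shortcutSaving_add_one (d : ℕ) : d ^ 2 ≤ 4 * shortcutSaving d + 1 := by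
  induction d using Nat.twoStepInduction with
  | zero => simp
  | one => simp [shortcutSaving]
  | more d ih _ =>
    rw [shortcutSaving_add_two]
    nlinarith

namespace SimpleGraph

variable {U : Type*} {G : SimpleGraph U} {u v : U}

lemma Walk.dist_getVert_of_length_eq_dist (p : G.Walk u v) (hp : p.length = G.dist u v)
    {t : ℕ} (ht : t ≤ p.length) : G.dist u (p.getVert t) = t := by
  rw [← length_eq_dist_of_subwalk hp (p.isSubwalk_take t), Walk.take_length]
  omega

lemma Walk.dist_getVert_end_of_length_eq_dist (p : G.Walk u v) (hp : p.length = G.dist u v)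
    (t : ℕ) : G.dist (p.getVert t) v = p.length - t := by
  rw [← length_eq_dist_of_subwalk hp (p.isSubwalk_drop t), Walk.drop_length]

lemma dist_sup_edge_le (huv : u ≠ v) {w : U} (hwv : G.Reachable w v) :
    (G ⊔ edge u v).dist u w ≤ G.dist w v + 1 := by
  obtain ⟨q, hq⟩ := hwv.exists_walk_length_eq_dist
  have hadj : (G ⊔ edge u v).Adj u v := Or.inr (by simp [edge_adj, huv])
  simpa [hq] using dist_le ((q.reverse.mapLe le_sup_left).cons hadj)

lemma shortcutSaving_add_sum_dist_sup_edge_le [Fintype U] (hG : G.Preconnected) (huv : u ≠ v) :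
    shortcutSaving (G.dist u v) + ∑ w, (G ⊔ edge u v).dist u w ≤ ∑ w, G.dist u w := by
  obtain ⟨p, hp⟩ := (hG u v).exists_walk_length_eq_dist
  set H := G ⊔ edge u v
  have hsplit : ∑ w, G.dist u w = ∑ w, (G.dist u w - H.dist u w) + ∑ w, H.dist u w := by
    rw [← Finset.sum_add_distrib]
    exact Finset.sum_congr rfl fun w _ =>
      (Nat.sub_add_cancel ((hG u w).dist_anti le_sup_left)).symm
  have hsaving : ∀ t ∈ Finset.range (p.length + 1),
      2 * t - (p.length + 1) ≤ G.dist u (p.getVert t) - H.dist u (p.getVert t) := by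
    intro t ht
    rw [Finset.mem_range_succ_iff] at ht
    have hfar := p.dist_getVert_of_length_eq_dist hp ht
    have hnear : H.dist u (p.getVert t) ≤ G.dist (p.getVert t) v + 1 :=
      dist_sup_edge_le huv (hG _ v)
    rw [p.dist_getVert_end_of_length_eq_dist hp] at hnear
    omega
  have hinj : Set.InjOn p.getVert (Finset.range (p.length + 1)) := by
    intro s hs t ht hst
    simp only [Finset.coe_range, Set.mem_Iio, Nat.lt_succ_iff] at hs ht
    rw [← p.dist_getVert_of_length_eq_dist hp hs, hst, p.dist_getVert_of_length_eq_dist hp ht]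
  rw [← hp, hsplit]
  gcongr
  calc shortcutSaving p.length
      ≤ ∑ t ∈ Finset.range (p.length + 1), (G.dist u (p.getVert t) - H.dist u (p.getVert t)) :=
        Finset.sum_le_sum hsaving
    _ = ∑ w ∈ (Finset.range (p.length + 1)).image p.getVert, (G.dist u w - H.dist u w) := by
        rw [Finset.sum_image hinj]
    _ ≤ ∑ w, (G.dist u w - H.dist u w) := Finset.sum_le_sum_of_subset (Finset.subset_univ _)

end SimpleGraph

section

variable {U : Type*} [Finite U] {G : SimpleGraph U} {i j : U}

lemma degE_addE (hij : i ≠ j) (hnadj : ¬G.Adj i j) : degE (addE G i j) i = degE G i + 1 := by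
  have hneighbors : (addE G i j).neighborSet i = insert j (G.neighborSet i) := by
    ext k
    rcases eq_or_ne k j with rfl | hk
    · simp [addE, edge_adj, hij]
    · simp [addE, edge_adj, hk, hij]
  rw [degE, degE, hneighbors, Set.ncard_insert_of_notMem (s := G.neighborSet i) hnadj]

end

section

variable {TA : Finset V} {A cA cB : ℝ} {G : SimpleGraph V} {i j : V}

lemma cost_eq_ofReal (hA : 0 ≤ A) (hcA : 0 ≤ cA) (hG : G.Preconnected) (hi : i ∈ TA) :
    cost TA A cA cB G i = ENNReal.ofReal (degE G i * cA + A * ∑ k ∈ TA, (G.dist i k : ℝ)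
      + ∑ k ∈ TAᶜ, (G.dist i k : ℝ)) := by
  have hdE : ∀ s : Finset V, ∑ k ∈ s, dE G i k = ENNReal.ofReal (∑ k ∈ s, (G.dist i k : ℝ)) := by
    intro s
    rw [ENNReal.ofReal_sum_of_nonneg fun k _ => Nat.cast_nonneg _]
    exact Finset.sum_congr rfl fun k _ => by rw [dE, if_pos (hG i k), ENNReal.ofReal_natCast]
  rw [cost, if_pos hi, hdE, hdE, ENNReal.ofReal_add (by positivity) (by positivity),
    ENNReal.ofReal_add (by positivity) (by positivity), ENNReal.ofReal_mul (by positivity),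
    ENNReal.ofReal_mul hA, ENNReal.ofReal_natCast]

lemma shortcutSaving_lt_of_cost_lt_cost_addE (hA : 1 ≤ A) (hcA : 0 ≤ cA) (hG : G.Preconnected)
    (hi : i ∈ TA) (hj : j ∈ TA) (hij : i ≠ j) (hnadj : ¬G.Adj i j)
    (hlt : cost TA A cA cB G i < cost TA A cA cB (addE G i j) i) :
    (A - 1) * ((G.dist i j : ℝ) - 1) + shortcutSaving (G.dist i j) < cA := by
  set H := addE G i j
  have hH : H.Preconnected := hG.mono le_sup_left
  rw [cost_eq_ofReal (by linarith) hcA hG hi, cost_eq_ofReal (by linarith) hcA hH hi,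
    ENNReal.ofReal_lt_ofReal_iff_of_nonneg (by positivity), degE_addE hij hnadj] at hlt
  push_cast at hlt
  have hshorter : ∀ k, (H.dist i k : ℝ) ≤ G.dist i k := fun k => by
    exact_mod_cast (hG i k).dist_anti le_sup_left
  have hHij : (H.dist i j : ℝ) ≤ 1 := by
    exact_mod_cast (dist_sup_edge_le hij (Reachable.refl j)).trans_eq (by simp)
  have htotal :
      (shortcutSaving (G.dist i j) : ℝ) + ∑ k, (H.dist i k : ℝ) ≤ ∑ k, (G.dist i k : ℝ) := by
    exact_mod_cast shortcutSaving_add_sum_dist_sup_edge_le hG hij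
  have hTA : (G.dist i j : ℝ) - H.dist i j ≤ ∑ k ∈ TA, ((G.dist i k : ℝ) - H.dist i k) :=
    Finset.single_le_sum (f := fun k => (G.dist i k : ℝ) - H.dist i k)
      (fun k _ => sub_nonneg.mpr (hshorter k)) hj
  rw [← Finset.sum_add_sum_compl TA, ← Finset.sum_add_sum_compl TA] at htotal
  rw [Finset.sum_sub_distrib] at hTA
  have hA1 : 0 ≤ A - 1 := by linarith
  -- The weighted saving is the total saving plus `A - 1` times the saving on `TA`, which
  -- includes the saving `d - 1` at `j`.
  linarith [mul_le_mul_of_nonneg_left hTA hA1, mul_le_mul_of_nonneg_left hHij hA1]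

lemma PairwiseStable.shortcutSaving_lt (hstable : PairwiseStable TA A cA cB G) (hA : 1 ≤ A)
    (hcA : 0 ≤ cA) (hG : G.Preconnected) (hi : i ∈ TA) (hj : j ∈ TA) (hij : i ≠ j)
    (hnadj : ¬G.Adj i j) :
    (A - 1) * ((G.dist i j : ℝ) - 1) + shortcutSaving (G.dist i j) < cA := by
  rcases hstable.2 i j hij hnadj with hlt | hlt
  · exact shortcutSaving_lt_of_cost_lt_cost_addE hA hcA hG hi hj hij hnadj hlt
  · rw [show addE G i j = addE G j i by rw [addE, addE, edge_comm]] at hlt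
    simpa only [dist_comm] using
      shortcutSaving_lt_of_cost_lt_cost_addE hA hcA hG hj hi hij.symm (fun h => hnadj h.symm) hlt

end

lemma le_sqrt_sub_of_mul_le {d A c : ℝ} (h : (d - 1) * (d + 4 * A - 3) ≤ 4 * c) :
    d ≤ √((1 - 2 * A) ^ 2 + 4 * c) - 2 * (A - 1) := by
  rw [le_sub_iff_add_le]
  exact Real.le_sqrt_of_sq_le (by linear_combination h)

theorem stmt2_general (TA : Finset V) (A cA cB : ℝ)
    (hA : 1 < A) (hcA : 1 < cA)
    (G : SimpleGraph V) (hconn : G.Connected)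
    (hstable : PairwiseStable TA A cA cB G)
    (i j : V) (hi : i ∈ TA) (hj : j ∈ TA) (hij : i ≠ j) :
    (G.dist i j : ℝ) ≤ Real.sqrt ((1 - 2 * A) ^ 2 + 4 * cA) - 2 * (A - 1) := by
  apply le_sqrt_sub_of_mul_le
  by_cases hadj : G.Adj i j
  · rw [dist_eq_one_iff_adj.mpr hadj]
    norm_num
    linarith
  · have hsaving := hstable.shortcutSaving_lt hA.le (by linarith) hconn.preconnected hi hj hij hadj
    have hsq : (G.dist i j : ℝ) ^ 2 ≤ 4 * shortcutSaving (G.dist i j) + 1 := by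
      exact_mod_cast sq_le_four_mul_shortcutSaving_add_one _
    linarith

/-- In every pairwise-stable connected graph, the distance between any
two distinct nodes `i, j ∈ T_A` is at most `√((1-2A)² + 4c_A) - 2(A-1)`. -/
theorem stmt2 (TA : Finset V) (A cA cB : ℝ)
    (hA : 1 < A) (hcA : 1 < cA) (hAB : cA ≤ cB)
    (G : SimpleGraph V) (hconn : G.Connected)
    (hstable : PairwiseStable TA A cA cB G)
    (i j : V) (hi : i ∈ TA) (hj : j ∈ TA) (hij : i ≠ j) :
    (G.dist i j : ℝ) ≤ Real.sqrt ((1 - 2 * A) ^ 2 + 4 * cA) - 2 * (A - 1) :=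
  stmt2_general TA A cA cB hA hcA G hconn hstable i j hi hj hij
end
end

section
/- Assume 1 < c_A ≤ c_B, c_A < A, and (A+1)/2 ≤ c. Fix j* ∈ T_A and let G* be the graph on V in which T_A induces a complete graph and every node of T_B is adjacent to j* and to no other node. Then G* minimizes the social cost among all connected graphs on V: for every connected graph G on V, S(G*) ≤ S(G). In particular (since G* is pairwise stable) the price of stability is 1. -/
open SimpleGraph Classical
open scoped ENNReal

noncomputable section

variable {V : Type*} [Fintype V] [DecidableEq V]

/-- The social cost: the sum of the individual costs. -/
def socialCost (TA : Finset V) (A cA cB : ℝ) (G : SimpleGraph V) : ℝ≥0∞ :=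
  ∑ i, cost TA A cA cB G i

/-- The graph in which `T_A` induces a complete graph and every node of `T_B` is
adjacent to `jstar ∈ T_A` and to no other node. -/
def Gstar (TA : Finset V) (jstar : V) : SimpleGraph V :=
  SimpleGraph.fromRel (fun i j => (i ∈ TA ∧ j ∈ TA) ∨ (i ∉ TA ∧ j = jstar))

/-- The graph in which `T_A` induces a complete graph, every node of `T_B` is adjacent
to every node of `T_A`, and no two nodes of `T_B` are adjacent. -/
def Gss (TA : Finset V) : SimpleGraph V :=
  SimpleGraph.fromRel (fun i j => i ∈ TA ∨ j ∈ TA)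

/-!
Write `2 · S(G) = ∑ᵢ ∑ⱼ (tᵢⱼ + tⱼᵢ)`, where `tᵢⱼ` is what `i` pays on account of `j`: the link
`ij` if present, plus `j`'s weight times `d(i, j)`. Each pair cost `tᵢⱼ + tⱼᵢ` is at least a bound
that only sees whether `i` and `j` are linked, with equality at distance at most `2`, hence in
`G*`. Charge `δ = c_A + c_B - A - 1 ≥ 0` to every minor endpoint of a link: after this
correction `G*` minimises every pair bound separately, and it has the fewest minor link-ends
possible (one per minor node, whereas in a connected graph every minor node has a link).

For stability, deleting a link of `G*` either isolates a minor node or trades `c_A` for an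
extra distance `A`; adding a link to a minor node saves at most `1` in distance, as `G*` has
diameter `2`, and costs more than `1`.
-/

lemma ENNReal.sum_lt_sum_of_ne_top {ι : Type*} {s : Finset ι} {f g : ι → ℝ≥0∞}
    (hf : ∑ i ∈ s, f i ≠ ⊤) (hle : ∀ i ∈ s, f i ≤ g i) {j : ι} (hj : j ∈ s) (hlt : f j < g j) :
    ∑ i ∈ s, f i < ∑ i ∈ s, g i := by
  rw [← Finset.add_sum_erase s f hj] at hf ⊢
  rw [← Finset.add_sum_erase s g hj]
  exact ENNReal.add_lt_add_of_lt_of_le (ENNReal.add_ne_top.mp hf).2 hlt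
    (Finset.sum_le_sum fun i hi => hle i (Finset.mem_of_mem_erase hi))

section Distance

variable {G H : SimpleGraph V} {i j k : V}

lemma dE_eq_edist (G : SimpleGraph V) (i j : V) : dE G i j = G.edist i j := by
  by_cases h : G.Reachable i j
  · rw [dE, if_pos h, ← h.coe_dist_eq_edist, ENat.toENNReal_coe]
  · rw [dE, if_neg h, edist_eq_top_of_not_reachable h, ENat.toENNReal_top]

lemma dE_self (G : SimpleGraph V) (i : V) : dE G i i = 0 := by
  simp [dE_eq_edist]

lemma dE_comm (G : SimpleGraph V) (i j : V) : dE G i j = dE G j i := by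
  rw [dE_eq_edist, dE_eq_edist, edist_comm]

lemma dE_of_adj (h : G.Adj i j) : dE G i j = 1 := by
  simp [dE_eq_edist, edist_eq_one_iff_adj.mpr h]

lemma two_le_dE (hne : i ≠ j) (h : ¬ G.Adj i j) : 2 ≤ dE G i j := by
  have : 1 < G.edist i j := not_le.mp fun hle => (edist_le_one_iff_adj_or_eq.mp hle).elim h hne
  rw [dE_eq_edist, ← one_add_one_eq_two]
  exact_mod_cast Order.add_one_le_of_lt this

lemma dE_anti (h : H ≤ G) (i j : V) : dE G i j ≤ dE H i j := by
  rw [dE_eq_edist, dE_eq_edist]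
  exact_mod_cast edist_anti h

lemma dE_le_two_of_le_one (hik : G.edist i k ≤ 1) (hkj : G.edist k j ≤ 1) : dE G i j ≤ 2 := by
  rw [dE_eq_edist, ← one_add_one_eq_two]
  exact_mod_cast G.edist_triangle.trans (add_le_add hik hkj)

omit [Fintype V] [DecidableEq V] in
lemma not_reachable_of_isIsolated (hi : G.IsIsolated i) (hne : i ≠ j) : ¬ G.Reachable i j := by
  rintro ⟨_ | ⟨hadj, _⟩⟩
  exacts [hne rfl, hi _ hadj]

end Distance

section Cost

variable {TA : Finset V} {A cA cB : ℝ} {G : SimpleGraph V} {i : V}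

def weight (TA : Finset V) (A : ℝ) (j : V) : ℝ := if j ∈ TA then A else 1

def linkCost (TA : Finset V) (cA cB : ℝ) (i : V) : ℝ := if i ∈ TA then cA else cB

omit [Fintype V] in
lemma weight_pos (hA : 0 < A) (k : V) : 0 < weight TA A k := by
  unfold weight; split_ifs <;> linarith

omit [Fintype V] in
lemma weight_nonneg (hA : 0 ≤ A) (k : V) : 0 ≤ weight TA A k := by
  unfold weight; split_ifs <;> linarith

omit [Fintype V] in
lemma linkCost_nonneg (hcA : 0 ≤ cA) (hcB : 0 ≤ cB) (k : V) : 0 ≤ linkCost TA cA cB k := by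
  unfold linkCost; split_ifs <;> linarith

def costTerm (TA : Finset V) (A cA cB : ℝ) (G : SimpleGraph V) (i j : V) : ℝ≥0∞ :=
  (if G.Adj i j then ENNReal.ofReal (linkCost TA cA cB i) else 0)
    + ENNReal.ofReal (weight TA A j) * dE G i j

lemma cost_eq_sum_costTerm (G : SimpleGraph V) (i : V) :
    cost TA A cA cB G i = ∑ j, costTerm TA A cA cB G i j := by
  have hlinks : ∑ j, (if G.Adj i j then ENNReal.ofReal (linkCost TA cA cB i) else 0)
      = degE G i * ENNReal.ofReal (linkCost TA cA cB i) := by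
    rw [← Finset.sum_filter, Finset.sum_const, nsmul_eq_mul, degE,
      Set.ncard_eq_toFinset_card', ← neighborFinset_def, neighborFinset_eq_filter]
  have hdist : ∑ j, ENNReal.ofReal (weight TA A j) * dE G i j
      = ENNReal.ofReal A * ∑ j ∈ TA, dE G i j + ∑ j ∈ TAᶜ, dE G i j := by
    rw [← Finset.sum_add_sum_compl TA, Finset.mul_sum]
    congr 1 <;> refine Finset.sum_congr rfl fun j hj => ?_
    · rw [weight, if_pos hj]
    · rw [weight, if_neg (Finset.mem_compl.mp hj), ENNReal.ofReal_one, one_mul]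
  simp only [costTerm]
  rw [cost, Finset.sum_add_distrib, hlinks, hdist, linkCost, add_assoc]

lemma two_mul_socialCost (G : SimpleGraph V) :
    2 * socialCost TA A cA cB G
      = ∑ i, ∑ j, (costTerm TA A cA cB G i j + costTerm TA A cA cB G j i) := by
  simp only [Finset.sum_add_distrib, socialCost, cost_eq_sum_costTerm]
  rw [Finset.sum_comm (f := fun i j => costTerm TA A cA cB G j i), two_mul]

lemma socialCost_eq_top_of_not_connected [Nonempty V] (hA : 0 < A) (hG : ¬ G.Connected) :
    socialCost TA A cA cB G = ⊤ := by
  obtain ⟨u, v, huv⟩ : ∃ u v, ¬ G.Reachable u v := by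
    by_contra! h
    exact hG ⟨h⟩
  have hterm : costTerm TA A cA cB G u v = ⊤ := by
    rw [costTerm, dE, if_neg huv, ENNReal.mul_top (ENNReal.ofReal_pos.mpr (weight_pos hA v)).ne',
      add_top]
  rw [socialCost, ENNReal.sum_eq_top]
  refine ⟨u, Finset.mem_univ u, ?_⟩
  rw [cost_eq_sum_costTerm, ENNReal.sum_eq_top]
  exact ⟨v, Finset.mem_univ v, hterm⟩

end Cost

section PairBound

variable {TA : Finset V} {A cA cB : ℝ} {G : SimpleGraph V} {i j : V}

def pairBound (TA : Finset V) (A cA cB : ℝ) (G : SimpleGraph V) (i j : V) : ℝ :=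
  if i = j then 0
  else if G.Adj i j then linkCost TA cA cB i + linkCost TA cA cB j + (weight TA A i + weight TA A j)
  else 2 * (weight TA A i + weight TA A j)

omit [Fintype V] in
lemma pairBound_nonneg (hA : 0 ≤ A) (hcA : 0 ≤ cA) (hcB : 0 ≤ cB) :
    0 ≤ pairBound TA A cA cB G i j := by
  have := weight_nonneg (TA := TA) hA i
  have := weight_nonneg (TA := TA) hA j
  have := linkCost_nonneg (TA := TA) hcA hcB i
  have := linkCost_nonneg (TA := TA) hcA hcB j
  unfold pairBound
  split_ifs <;> linarith

lemma costTerm_self : costTerm TA A cA cB G i i = 0 := by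
  simp [costTerm, dE_self]

lemma costTerm_add_costTerm_of_adj (h : G.Adj i j) :
    costTerm TA A cA cB G i j + costTerm TA A cA cB G j i
      = ENNReal.ofReal (linkCost TA cA cB i) + ENNReal.ofReal (linkCost TA cA cB j)
        + (ENNReal.ofReal (weight TA A i) + ENNReal.ofReal (weight TA A j)) := by
  rw [costTerm, costTerm, if_pos h, if_pos h.symm, dE_of_adj h, dE_of_adj h.symm]
  ring

lemma costTerm_add_costTerm_of_not_adj (h : ¬ G.Adj i j) :
    costTerm TA A cA cB G i j + costTerm TA A cA cB G j i
      = (ENNReal.ofReal (weight TA A i) + ENNReal.ofReal (weight TA A j)) * dE G i j := by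
  rw [costTerm, costTerm, if_neg h, if_neg (fun h' => h h'.symm), dE_comm G j i]
  ring

lemma ofReal_pairBound_le :
    ENNReal.ofReal (pairBound TA A cA cB G i j)
      ≤ costTerm TA A cA cB G i j + costTerm TA A cA cB G j i := by
  rw [pairBound]
  split_ifs with hij hadj
  · simp
  · rw [costTerm_add_costTerm_of_adj hadj]
    exact ENNReal.ofReal_add_le.trans (add_le_add
      ENNReal.ofReal_add_le ENNReal.ofReal_add_le)
  · rw [costTerm_add_costTerm_of_not_adj hadj, ENNReal.ofReal_mul zero_le_two,
      ENNReal.ofReal_ofNat, mul_comm]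
    exact mul_le_mul' ENNReal.ofReal_add_le (two_le_dE hij hadj)

lemma costTerm_add_costTerm_le_pairBound (hA : 0 ≤ A) (hcA : 0 ≤ cA) (hcB : 0 ≤ cB)
    (hd : dE G i j ≤ 2) :
    costTerm TA A cA cB G i j + costTerm TA A cA cB G j i
      ≤ ENNReal.ofReal (pairBound TA A cA cB G i j) := by
  have hwi := weight_nonneg (TA := TA) hA i
  have hwj := weight_nonneg (TA := TA) hA j
  have hli := linkCost_nonneg (TA := TA) hcA hcB i
  have hlj := linkCost_nonneg (TA := TA) hcA hcB j
  rw [pairBound]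
  split_ifs with hij hadj
  · simp [hij, costTerm_self]
  · rw [costTerm_add_costTerm_of_adj hadj, ENNReal.ofReal_add (by positivity) (by positivity),
      ENNReal.ofReal_add hli hlj, ENNReal.ofReal_add hwi hwj]
  · rw [costTerm_add_costTerm_of_not_adj hadj, ENNReal.ofReal_mul zero_le_two,
      ENNReal.ofReal_ofNat, ENNReal.ofReal_add hwi hwj, mul_comm 2]
    exact mul_le_mul_right hd _

end PairBound

section SocialCostBound

variable {TA : Finset V} {A cA cB : ℝ} {G : SimpleGraph V}

lemma ofReal_sum_sum_pairBound (hA : 0 ≤ A) (hcA : 0 ≤ cA) (hcB : 0 ≤ cB) :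
    ENNReal.ofReal (∑ i, ∑ j, pairBound TA A cA cB G i j)
      = ∑ i, ∑ j, ENNReal.ofReal (pairBound TA A cA cB G i j) := by
  rw [ENNReal.ofReal_sum_of_nonneg fun i _ =>
    Finset.sum_nonneg fun j _ => pairBound_nonneg hA hcA hcB]
  exact Finset.sum_congr rfl fun i _ =>
    ENNReal.ofReal_sum_of_nonneg fun j _ => pairBound_nonneg hA hcA hcB

lemma ofReal_sum_pairBound_le_two_mul_socialCost (hA : 0 ≤ A) (hcA : 0 ≤ cA) (hcB : 0 ≤ cB) :
    ENNReal.ofReal (∑ i, ∑ j, pairBound TA A cA cB G i j) ≤ 2 * socialCost TA A cA cB G := by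
  rw [ofReal_sum_sum_pairBound hA hcA hcB, two_mul_socialCost]
  exact Finset.sum_le_sum fun i _ => Finset.sum_le_sum fun j _ => ofReal_pairBound_le

lemma two_mul_socialCost_le_of_dE_le_two (hA : 0 ≤ A) (hcA : 0 ≤ cA) (hcB : 0 ≤ cB)
    (hd : ∀ i j, dE G i j ≤ 2) :
    2 * socialCost TA A cA cB G ≤ ENNReal.ofReal (∑ i, ∑ j, pairBound TA A cA cB G i j) := by
  rw [ofReal_sum_sum_pairBound hA hcA hcB, two_mul_socialCost]
  exact Finset.sum_le_sum fun i _ => Finset.sum_le_sum fun j _ =>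
    costTerm_add_costTerm_le_pairBound hA hcA hcB (hd i j)

end SocialCostBound

section Gstar

variable {TA : Finset V} {jstar : V} {i j : V}

omit [Fintype V] [DecidableEq V] in
lemma Gstar_adj_iff : (Gstar TA jstar).Adj i j ↔
    i ≠ j ∧ ((i ∈ TA ∧ j ∈ TA) ∨ (i ∉ TA ∧ j = jstar) ∨ (j ∉ TA ∧ i = jstar)) := by
  simp only [Gstar, fromRel_adj]
  tauto

omit [Fintype V] [DecidableEq V] in
lemma Gstar_adj_iff_of_notMem (hjstar : jstar ∈ TA) (hi : i ∉ TA) :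
    (Gstar TA jstar).Adj i j ↔ j = jstar := by
  rw [Gstar_adj_iff]
  constructor
  · rintro ⟨-, ⟨hi', -⟩ | ⟨-, rfl⟩ | ⟨-, rfl⟩⟩
    exacts [absurd hi' hi, rfl, absurd hjstar hi]
  · rintro rfl
    exact ⟨fun h => hi (h ▸ hjstar), Or.inr (Or.inl ⟨hi, rfl⟩)⟩

omit [Fintype V] [DecidableEq V] in
lemma Gstar_adj_jstar_or_eq (hjstar : jstar ∈ TA) (i : V) :
    (Gstar TA jstar).Adj i jstar ∨ i = jstar := by
  by_cases hi : i = jstar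
  · exact Or.inr hi
  · exact Or.inl (Gstar_adj_iff.mpr ⟨hi, by by_cases hiA : i ∈ TA <;> simp [hiA, hjstar]⟩)

lemma dE_Gstar_le_two (hjstar : jstar ∈ TA) (i j : V) : dE (Gstar TA jstar) i j ≤ 2 :=
  dE_le_two_of_le_one (edist_le_one_iff_adj_or_eq.mpr (Gstar_adj_jstar_or_eq hjstar i))
    (edist_comm.trans_le (edist_le_one_iff_adj_or_eq.mpr (Gstar_adj_jstar_or_eq hjstar j)))

end Gstar

section Exchange

variable {TA : Finset V} {A cA cB : ℝ} {jstar : V} {G : SimpleGraph V}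

def minorLink (TA : Finset V) (G : SimpleGraph V) (i j : V) : ℝ :=
  if G.Adj i j ∧ i ∉ TA then 1 else 0

omit [Fintype V] in
/-- With `δ = cA + cB - A - 1` charged per minor endpoint of a link, a link costs
`2 cA + 2 A ≤ 4 A` between major nodes, exactly `2 (A + 1)` (as much as distance `2`) between a
major and a minor node, and `2 cB + 2 - 2 δ ≥ 4` between minor nodes. -/
lemma pairBound_Gstar_add_le (hcAA : cA ≤ A) (hjstar : jstar ∈ TA) (G : SimpleGraph V)
    (i j : V) :
    pairBound TA A cA cB (Gstar TA jstar) i j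
        + (cA + cB - A - 1) * (minorLink TA G i j + minorLink TA G j i)
      ≤ pairBound TA A cA cB G i j
        + (cA + cB - A - 1) * (minorLink TA (Gstar TA jstar) i j
          + minorLink TA (Gstar TA jstar) j i) := by
  by_cases hij : i = j
  · simp [hij, pairBound, minorLink]
  have hAA : i ∈ TA → j ∈ TA → (Gstar TA jstar).Adj i j := fun hi hj =>
    Gstar_adj_iff.mpr ⟨hij, Or.inl ⟨hi, hj⟩⟩
  have hBB : i ∉ TA → j ∉ TA → ¬ (Gstar TA jstar).Adj i j := fun hi hj h =>
    hj ((Gstar_adj_iff_of_notMem hjstar hi).mp h ▸ hjstar)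
  simp only [pairBound, minorLink, weight, linkCost, if_neg hij, (Gstar TA jstar).adj_comm j i,
    G.adj_comm j i]
  by_cases hi : i ∈ TA <;> by_cases hj : j ∈ TA <;> split_ifs <;> simp_all <;> linarith

lemma sum_minorLink_Gstar_le (hjstar : jstar ∈ TA) (hG : ∀ b ∉ TA, ∃ a, G.Adj b a) (i : V) :
    ∑ j, minorLink TA (Gstar TA jstar) i j ≤ ∑ j, minorLink TA G i j := by
  by_cases hi : i ∈ TA
  · simp [minorLink, hi]
  obtain ⟨a, ha⟩ := hG i hi
  calc ∑ j, minorLink TA (Gstar TA jstar) i j = 1 := by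
        simp [minorLink, hi, Gstar_adj_iff_of_notMem hjstar hi]
    _ = minorLink TA G i a := by simp [minorLink, ha, hi]
    _ ≤ ∑ j, minorLink TA G i j :=
        Finset.single_le_sum (fun j _ => by unfold minorLink; split_ifs <;> norm_num)
          (Finset.mem_univ a)

lemma sum_pairBound_Gstar_le (hcAA : cA ≤ A) (hδ : A + 1 ≤ cA + cB) (hjstar : jstar ∈ TA)
    (hG : ∀ b ∉ TA, ∃ a, G.Adj b a) :
    ∑ i, ∑ j, pairBound TA A cA cB (Gstar TA jstar) i j ≤ ∑ i, ∑ j, pairBound TA A cA cB G i j := by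
  have hswap : ∀ H : SimpleGraph V,
      ∑ i, ∑ j, minorLink TA H j i = ∑ i, ∑ j, minorLink TA H i j := fun H =>
    Finset.sum_comm
  have hpairs := Finset.sum_le_sum fun i (_ : i ∈ Finset.univ) => Finset.sum_le_sum
    fun j (_ : j ∈ Finset.univ) => pairBound_Gstar_add_le (cB := cB) hcAA hjstar G i j
  simp only [Finset.sum_add_distrib, ← Finset.mul_sum, hswap] at hpairs
  have hlinks := Finset.sum_le_sum fun i (_ : i ∈ Finset.univ) =>
    sum_minorLink_Gstar_le hjstar hG i
  linarith [mul_le_mul_of_nonneg_left hlinks (by linarith : 0 ≤ cA + cB - A - 1)]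

end Exchange

theorem socialCost_Gstar_le {TA : Finset V} {A cA cB : ℝ} {jstar : V} {G : SimpleGraph V}
    (hA : 0 ≤ A) (hcA : 0 ≤ cA) (hAB : cA ≤ cB) (hcAA : cA ≤ A) (hδ : A + 1 ≤ cA + cB)
    (hjstar : jstar ∈ TA) (hG : G.Connected) :
    socialCost TA A cA cB (Gstar TA jstar) ≤ socialCost TA A cA cB G := by
  have hcB : 0 ≤ cB := hcA.trans hAB
  have hminor : ∀ b ∉ TA, ∃ a, G.Adj b a := fun b hb => by
    have := nontrivial_of_ne b jstar fun h => hb (h ▸ hjstar)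
    exact exists_adj_iff_not_isIsolated.mpr (hG.preconnected.not_isIsolated b)
  have h2 : 2 * socialCost TA A cA cB (Gstar TA jstar) ≤ 2 * socialCost TA A cA cB G :=
    calc 2 * socialCost TA A cA cB (Gstar TA jstar)
        ≤ ENNReal.ofReal (∑ i, ∑ j, pairBound TA A cA cB (Gstar TA jstar) i j) :=
          two_mul_socialCost_le_of_dE_le_two hA hcA hcB (dE_Gstar_le_two hjstar)
      _ ≤ ENNReal.ofReal (∑ i, ∑ j, pairBound TA A cA cB G i j) :=
          ENNReal.ofReal_le_ofReal (sum_pairBound_Gstar_le hcAA hδ hjstar hminor)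
      _ ≤ 2 * socialCost TA A cA cB G := ofReal_sum_pairBound_le_two_mul_socialCost hA hcA hcB
  exact (ENNReal.mul_le_mul_iff_right two_ne_zero ENNReal.ofNat_ne_top).mp h2

section Stability

variable {TA : Finset V} {A cA cB : ℝ} {G H : SimpleGraph V} {i j k : V}

lemma cost_lt_cost_of_costTerm (hfin : cost TA A cA cB G i ≠ ⊤)
    (hle : ∀ k ≠ j, costTerm TA A cA cB G i k ≤ costTerm TA A cA cB H i k)
    (hlt : costTerm TA A cA cB G i j < costTerm TA A cA cB H i j) :
    cost TA A cA cB G i < cost TA A cA cB H i := by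
  rw [cost_eq_sum_costTerm] at hfin ⊢
  rw [cost_eq_sum_costTerm]
  refine ENNReal.sum_lt_sum_of_ne_top hfin (fun k _ => ?_) (Finset.mem_univ j) hlt
  rcases eq_or_ne k j with rfl | hk
  exacts [hlt.le, hle k hk]

omit [Fintype V] [DecidableEq V] in
lemma delE_comm (G : SimpleGraph V) (i j : V) : delE G i j = delE G j i := by
  rw [delE, delE, Sym2.eq_swap]

omit [Fintype V] [DecidableEq V] in
lemma addE_comm (G : SimpleGraph V) (i j : V) : addE G i j = addE G j i := by
  rw [addE, addE, edge_comm]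

omit [Fintype V] [DecidableEq V] in
lemma delE_adj_iff_of_ne (hk : k ≠ j) : (delE G i j).Adj i k ↔ G.Adj i k := by
  simpa [delE, hk] using fun h _ => h.ne'

omit [Fintype V] [DecidableEq V] in
lemma addE_adj_iff_of_ne (hk : k ≠ j) : (addE G i j).Adj i k ↔ G.Adj i k := by
  simpa [addE, edge_adj, hk] using fun _ hki hik => absurd hki.symm hik

lemma costTerm_le_costTerm_delE (hk : k ≠ j) :
    costTerm TA A cA cB G i k ≤ costTerm TA A cA cB (delE G i j) i k := by
  rw [costTerm, costTerm, delE_adj_iff_of_ne hk]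
  gcongr
  exact dE_anti (deleteEdges_le _) i k

lemma cost_lt_cost_delE (hadj : G.Adj i j) (hfin : cost TA A cA cB G i ≠ ⊤)
    (hlt : ENNReal.ofReal (linkCost TA cA cB i) + ENNReal.ofReal (weight TA A j)
      < ENNReal.ofReal (weight TA A j) * dE (delE G i j) i j) :
    cost TA A cA cB G i < cost TA A cA cB (delE G i j) i := by
  refine cost_lt_cost_of_costTerm hfin (fun k hk => costTerm_le_costTerm_delE hk) ?_
  have hdel : ¬ (delE G i j).Adj i j := by simp [delE]
  rwa [costTerm, costTerm, if_pos hadj, if_neg hdel, dE_of_adj hadj, mul_one, zero_add]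

lemma costTerm_le_costTerm_addE (hk : k ≠ j) (hd : dE G i k ≤ 2) :
    costTerm TA A cA cB G i k ≤ costTerm TA A cA cB (addE G i j) i k := by
  rw [costTerm, costTerm, addE_adj_iff_of_ne hk]
  gcongr
  rcases eq_or_ne i k with rfl | hik
  · rw [dE_self, dE_self]
  by_cases hadj : G.Adj i k
  · rw [dE_of_adj hadj, dE_of_adj ((addE_adj_iff_of_ne hk).mpr hadj)]
  · exact hd.trans (two_le_dE hik ((addE_adj_iff_of_ne hk).not.mpr hadj))

lemma cost_lt_cost_addE (hij : i ≠ j) (hnadj : ¬ G.Adj i j) (hfin : cost TA A cA cB G i ≠ ⊤)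
    (hd : ∀ k, dE G i k ≤ 2) (hw : 0 ≤ weight TA A j) (hlt : weight TA A j < linkCost TA cA cB i) :
    cost TA A cA cB G i < cost TA A cA cB (addE G i j) i := by
  refine cost_lt_cost_of_costTerm hfin (fun k hk => costTerm_le_costTerm_addE hk (hd k)) ?_
  have hadd : (addE G i j).Adj i j := by simp [addE, edge_adj, hij]
  rw [costTerm, costTerm, if_neg hnadj, if_pos hadd, dE_of_adj hadd, mul_one, zero_add]
  calc ENNReal.ofReal (weight TA A j) * dE G i j
      ≤ ENNReal.ofReal (weight TA A j) * 2 := by gcongr; exact hd j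
    _ = ENNReal.ofReal (weight TA A j) + ENNReal.ofReal (weight TA A j) := by ring
    _ < ENNReal.ofReal (linkCost TA cA cB i) + ENNReal.ofReal (weight TA A j) :=
        ENNReal.add_lt_add_right ENNReal.ofReal_ne_top
          ((ENNReal.ofReal_lt_ofReal_iff_of_nonneg hw).mpr hlt)

end Stability

section GstarStable

variable {TA : Finset V} {A cA cB : ℝ} {jstar : V} {i j : V}

lemma cost_Gstar_ne_top (hjstar : jstar ∈ TA) (i : V) :
    cost TA A cA cB (Gstar TA jstar) i ≠ ⊤ := by
  rw [cost_eq_sum_costTerm]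
  refine ENNReal.sum_ne_top.mpr fun k _ => ENNReal.add_ne_top.mpr ⟨by split_ifs <;> simp, ?_⟩
  exact ENNReal.mul_ne_top ENNReal.ofReal_ne_top
    (ne_top_of_le_ne_top ENNReal.ofNat_ne_top (dE_Gstar_le_two hjstar i k))

lemma dE_delE_Gstar_eq_top (hjstar : jstar ∈ TA) {b : V} (hb : b ∉ TA) :
    dE (delE (Gstar TA jstar) b jstar) b jstar = ⊤ := by
  have hiso : (delE (Gstar TA jstar) b jstar).IsIsolated b := fun y hy => by
    obtain ⟨hadj, hne⟩ := (deleteEdges_adj ..).mp hy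
    exact hne (by rw [(Gstar_adj_iff_of_notMem hjstar hb).mp hadj]; rfl)
  exact if_neg (not_reachable_of_isIsolated hiso fun h => hb (h ▸ hjstar))

lemma cost_Gstar_lt_cost_delE (hA : 0 < A) (hcAA : cA < A) (hjstar : jstar ∈ TA)
    (hadj : (Gstar TA jstar).Adj i j) :
    cost TA A cA cB (Gstar TA jstar) i < cost TA A cA cB (delE (Gstar TA jstar) i j) i := by
  refine cost_lt_cost_delE hadj (cost_Gstar_ne_top hjstar i) ?_
  rcases Gstar_adj_iff.mp hadj with ⟨hij, ⟨hi, hj⟩ | ⟨hi, rfl⟩ | ⟨hj, rfl⟩⟩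
  · have hdel : ¬ (delE (Gstar TA jstar) i j).Adj i j := by simp [delE]
    rw [linkCost, weight, if_pos hi, if_pos hj]
    calc ENNReal.ofReal cA + ENNReal.ofReal A < ENNReal.ofReal A + ENNReal.ofReal A :=
          ENNReal.add_lt_add_right ENNReal.ofReal_ne_top
            ((ENNReal.ofReal_lt_ofReal_iff hA).mpr hcAA)
      _ = ENNReal.ofReal A * 2 := by ring
      _ ≤ ENNReal.ofReal A * dE (delE (Gstar TA jstar) i j) i j := by
          gcongr; exact two_le_dE hij hdel
  · rw [dE_delE_Gstar_eq_top hjstar hi,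
      ENNReal.mul_top (ENNReal.ofReal_pos.mpr (weight_pos hA _)).ne']
    finiteness
  · rw [delE_comm, dE_comm, dE_delE_Gstar_eq_top hjstar hj,
      ENNReal.mul_top (ENNReal.ofReal_pos.mpr (weight_pos hA _)).ne']
    finiteness

lemma cost_Gstar_lt_cost_addE (hcA : 1 < cA) (hAB : cA ≤ cB) (hjstar : jstar ∈ TA)
    (hij : i ≠ j) (hnadj : ¬ (Gstar TA jstar).Adj i j) (hj : j ∉ TA) :
    cost TA A cA cB (Gstar TA jstar) i < cost TA A cA cB (addE (Gstar TA jstar) i j) i := by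
  refine cost_lt_cost_addE hij hnadj (cost_Gstar_ne_top hjstar i) (dE_Gstar_le_two hjstar i)
    (by simp [weight, hj]) ?_
  rw [weight, linkCost, if_neg hj]
  split_ifs <;> linarith

theorem pairwiseStable_Gstar (hA : 0 < A) (hcA : 1 < cA) (hAB : cA ≤ cB) (hcAA : cA < A)
    (hjstar : jstar ∈ TA) : PairwiseStable TA A cA cB (Gstar TA jstar) := by
  refine ⟨fun i j hadj => ⟨cost_Gstar_lt_cost_delE hA hcAA hjstar hadj, ?_⟩,
    fun i j hij hnadj => ?_⟩
  · rw [delE_comm]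
    exact cost_Gstar_lt_cost_delE hA hcAA hjstar hadj.symm
  by_cases hj : j ∈ TA
  · have hi : i ∉ TA := fun hi => hnadj (Gstar_adj_iff.mpr ⟨hij, Or.inl ⟨hi, hj⟩⟩)
    right
    rw [addE_comm]
    exact cost_Gstar_lt_cost_addE hcA hAB hjstar hij.symm (fun h => hnadj h.symm) hi
  · exact Or.inl (cost_Gstar_lt_cost_addE hcA hAB hjstar hij hnadj hj)

end GstarStable

theorem stmt6_general (TA : Finset V) (A cA cB c : ℝ)
    (hcA : 1 < cA) (hAB : cA ≤ cB) (hcAA : cA < A)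
    (hc : c = (cA + cB) / 2) (hceq : (A + 1) / 2 ≤ c)
    (jstar : V) (hjstar : jstar ∈ TA) :
    (∀ G : SimpleGraph V, G.Connected →
        socialCost TA A cA cB (Gstar TA jstar) ≤ socialCost TA A cA cB G) ∧
    PairwiseStable TA A cA cB (Gstar TA jstar) ∧
    sInf (socialCost TA A cA cB '' {G : SimpleGraph V | PairwiseStable TA A cA cB G}) =
      sInf (socialCost TA A cA cB '' {G : SimpleGraph V | G.Connected}) := by
  have hA0 : 0 < A := by linarith
  have hopt : ∀ G : SimpleGraph V, G.Connected →
      socialCost TA A cA cB (Gstar TA jstar) ≤ socialCost TA A cA cB G := fun G hG =>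
    socialCost_Gstar_le hA0.le (by linarith) hAB hcAA.le (by linarith) hjstar hG
  have hstable := pairwiseStable_Gstar (cB := cB) hA0 hcA hAB hcAA hjstar
  have : Nonempty V := ⟨jstar⟩
  refine ⟨hopt, hstable, le_antisymm ?_ (le_sInf ?_)⟩
  · refine (sInf_le (Set.mem_image_of_mem (socialCost TA A cA cB) hstable)).trans (le_sInf ?_)
    rintro _ ⟨G, hG, rfl⟩
    exact hopt G hG
  · rintro _ ⟨G, -, rfl⟩
    by_cases hG : G.Connected
    · exact sInf_le ⟨G, hG, rfl⟩
    · rw [socialCost_eq_top_of_not_connected hA0 hG]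
      exact le_top

/-- Assuming `1 < c_A ≤ c_B`, `c_A < A` and `(A+1)/2 ≤ c`, the
star-over-clique graph `G*` minimizes the social cost among all connected graphs on `V`;
in particular, since `G*` is pairwise stable, the price of stability is `1`
(the minimal social cost over pairwise-stable graphs equals the minimal social cost over
connected graphs). -/
theorem stmt6 (TA : Finset V) (A cA cB c : ℝ)
    (hA : 1 < A) (hcA : 1 < cA) (hAB : cA ≤ cB) (hcAA : cA < A)
    (hc : c = (cA + cB) / 2) (hceq : (A + 1) / 2 ≤ c)
    (jstar : V) (hjstar : jstar ∈ TA) :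
    (∀ G : SimpleGraph V, G.Connected →
        socialCost TA A cA cB (Gstar TA jstar) ≤ socialCost TA A cA cB G) ∧
    PairwiseStable TA A cA cB (Gstar TA jstar) ∧
    sInf (socialCost TA A cA cB '' {G : SimpleGraph V | PairwiseStable TA A cA cB G}) =
      sInf (socialCost TA A cA cB '' {G : SimpleGraph V | G.Connected}) :=
  stmt6_general TA A cA cB c hcA hAB hcAA hc hceq jstar hjstar
end
end

section
/- Assume 1 < c_A ≤ c_B, c_A < A, and (A+1)/2 > c. Let G** be the graph on V in which T_A induces a complete graph, every node of T_B is adjacent to every node of T_A, and no two nodes of T_B are adjacent. Then S(G**) = 2·|T_B|·(|T_B| − 1 + ((A+1)/2 + c)·|T_A|) + |T_A|·(|T_A| − 1)·(c_A + A), and G** minimizes the social cost among all connected graphs on V: for every connected graph G on V, S(G**) ≤ S(G). -/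
open SimpleGraph Classical
open scoped ENNReal

noncomputable section

variable {V : Type*} [Fintype V] [DecidableEq V]

/-! For a connected graph the cost of `i` splits into the shares `pairCost G i j` of the
nodes `j`, so twice the social cost is the sum over ordered pairs of the symmetric pair costs
`pairCost G i j + pairCost G j i`, and it suffices to minimise each of these separately. `G**`
does so: a link between `i` and `j` costs its two endpoints no more than the extra distance
they would pay without it (`cA ≤ A` for two major players, `cA + cB ≤ A + 1` for a major and a
minor one), while two minor players pay at least `4` for each other (`cB ≥ 1`), which is
what they pay at distance `2` through a common major neighbour in `G**`. -/

theorem Finset.sum_ite_mem_const {ι M : Type*} [Fintype ι] [DecidableEq ι] [AddCommMonoid M]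
    (s : Finset ι) (a b : M) :
    ∑ j, (if j ∈ s then a else b) = s.card • a + sᶜ.card • b := by
  rw [← Finset.sum_add_sum_compl s]
  congr 1
  · exact (Finset.sum_congr rfl fun j hj => if_pos hj).trans (Finset.sum_const a)
  · exact (Finset.sum_congr rfl fun j hj => if_neg (Finset.mem_compl.mp hj)).trans
      (Finset.sum_const b)

theorem Finset.sum_sum_le_of_symm_le {ι : Type*} [Fintype ι] {f g : ι → ι → ℝ}
    (h : ∀ i j, f i j + f j i ≤ g i j + g j i) :
    ∑ i, ∑ j, f i j ≤ ∑ i, ∑ j, g i j := by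
  have symmetrize : ∀ F : ι → ι → ℝ, ∑ i, ∑ j, (F i j + F j i) = 2 * ∑ i, ∑ j, F i j := by
    intro F
    simp only [Finset.sum_add_distrib]
    rw [Finset.sum_comm (f := fun i j => F j i)]
    ring
  linarith [symmetrize f, symmetrize g,
    Finset.sum_le_sum fun i (_ : i ∈ Finset.univ) =>
      Finset.sum_le_sum fun j (_ : j ∈ Finset.univ) => h i j]

omit [Fintype V] in
def pairCost (TA : Finset V) (A cA cB : ℝ) (G : SimpleGraph V) (i j : V) : ℝ :=
  (if G.Adj i j then (if i ∈ TA then cA else cB) else 0)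
    + (if j ∈ TA then A else 1) * G.dist i j

section

variable {TA : Finset V} {A cA cB : ℝ}

omit [Fintype V] in
theorem pairCost_self (G : SimpleGraph V) (i : V) : pairCost TA A cA cB G i i = 0 := by
  simp [pairCost]

omit [Fintype V] in
theorem pairCost_nonneg (hA : 0 ≤ A) (hcA : 0 ≤ cA) (hcB : 0 ≤ cB) (G : SimpleGraph V)
    (i j : V) : 0 ≤ pairCost TA A cA cB G i j := by
  unfold pairCost
  split_ifs <;> positivity

theorem sum_pairCost_eq (G : SimpleGraph V) (i : V) :
    ∑ j, pairCost TA A cA cB G i j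
      = G.degree i * (if i ∈ TA then cA else cB)
        + A * ∑ j ∈ TA, (G.dist i j : ℝ) + ∑ j ∈ TAᶜ, (G.dist i j : ℝ) := by
  have links : ∑ j, (if G.Adj i j then (if i ∈ TA then cA else cB) else 0)
      = G.degree i * (if i ∈ TA then cA else cB) := by
    rw [← Finset.sum_filter, Finset.sum_const, nsmul_eq_mul, ← G.card_neighborFinset_eq_degree,
      G.neighborFinset_eq_filter]
  have distances : ∑ j, (if j ∈ TA then A else 1) * (G.dist i j : ℝ)
      = A * ∑ j ∈ TA, (G.dist i j : ℝ) + ∑ j ∈ TAᶜ, (G.dist i j : ℝ) := by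
    rw [← Finset.sum_add_sum_compl TA, Finset.mul_sum]
    congr 1
    · exact Finset.sum_congr rfl fun j hj => by rw [if_pos hj]
    · exact Finset.sum_congr rfl fun j hj => by rw [if_neg (Finset.mem_compl.mp hj), one_mul]
  rw [add_assoc, ← links, ← distances, ← Finset.sum_add_distrib]
  rfl

omit [Fintype V] [DecidableEq V] in
theorem degE_eq_degree (G : SimpleGraph V) (i : V) [Fintype (G.neighborSet i)] :
    degE G i = G.degree i := by
  rw [degE, ← G.coe_neighborFinset, Set.ncard_coe_finset, card_neighborFinset_eq_degree]

theorem dE_of_reachable {G : SimpleGraph V} {i j : V} (h : G.Reachable i j) :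
    dE G i j = ENNReal.ofReal (G.dist i j) := by
  rw [dE, if_pos h, ENNReal.ofReal_natCast]

theorem cost_eq_ofReal_sum_pairCost (hA : 0 ≤ A) (hcA : 0 ≤ cA) (hcB : 0 ≤ cB)
    {G : SimpleGraph V} (hG : G.Connected) (i : V) :
    cost TA A cA cB G i = ENNReal.ofReal (∑ j, pairCost TA A cA cB G i j) := by
  have hlink : 0 ≤ (if i ∈ TA then cA else cB) := by split_ifs <;> assumption
  have hdist : ∀ s : Finset V, 0 ≤ ∑ j ∈ s, (G.dist i j : ℝ) := fun s =>
    Finset.sum_nonneg fun j _ => Nat.cast_nonneg _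
  rw [sum_pairCost_eq, ENNReal.ofReal_add (by positivity) (hdist _),
    ENNReal.ofReal_add (by positivity) (by positivity), ENNReal.ofReal_mul (Nat.cast_nonneg _),
    ENNReal.ofReal_mul hA, ENNReal.ofReal_sum_of_nonneg fun j _ => Nat.cast_nonneg _,
    ENNReal.ofReal_sum_of_nonneg fun j _ => Nat.cast_nonneg _, ENNReal.ofReal_natCast, cost,
    degE_eq_degree]
  simp only [dE_of_reachable (hG.preconnected i _)]

theorem socialCost_eq_ofReal (hA : 0 ≤ A) (hcA : 0 ≤ cA) (hcB : 0 ≤ cB)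
    {G : SimpleGraph V} (hG : G.Connected) :
    socialCost TA A cA cB G = ENNReal.ofReal (∑ i, ∑ j, pairCost TA A cA cB G i j) := by
  rw [socialCost, ENNReal.ofReal_sum_of_nonneg fun i _ =>
    Finset.sum_nonneg fun j _ => pairCost_nonneg hA hcA hcB G i j]
  exact Finset.sum_congr rfl fun i _ => cost_eq_ofReal_sum_pairCost hA hcA hcB hG i

omit [Fintype V] [DecidableEq V] in
theorem gss_adj {i j : V} : (Gss TA).Adj i j ↔ i ≠ j ∧ (i ∈ TA ∨ j ∈ TA) := by
  rw [Gss, fromRel_adj]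
  tauto

omit [Fintype V] [DecidableEq V] in
theorem gss_connected (hTA : TA.Nonempty) : (Gss TA).Connected := by
  obtain ⟨a, ha⟩ := hTA
  have toHub : ∀ i, (Gss TA).Reachable i a := fun i => by
    by_cases hia : i = a
    · exact hia ▸ Reachable.refl i
    · exact (gss_adj.mpr ⟨hia, Or.inr ha⟩).reachable
  exact (connected_iff _).mpr ⟨fun i j => (toHub i).trans (toHub j).symm, ⟨a⟩⟩

omit [Fintype V] in
theorem gss_dist (hTA : TA.Nonempty) {i j : V} (hij : i ≠ j) :
    (Gss TA).dist i j = if i ∈ TA ∨ j ∈ TA then 1 else 2 := by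
  split_ifs with hmem
  · exact dist_eq_one_iff_adj.mpr (gss_adj.mpr ⟨hij, hmem⟩)
  · rw [not_or] at hmem
    obtain ⟨a, ha⟩ := hTA
    have hia : (Gss TA).Adj i a := gss_adj.mpr ⟨fun h => hmem.1 (h ▸ ha), Or.inr ha⟩
    have haj : (Gss TA).Adj a j := gss_adj.mpr ⟨fun h => hmem.2 (h ▸ ha), Or.inl ha⟩
    have hle : (Gss TA).dist i j ≤ 2 := by
      simpa using dist_le (Walk.cons hia (Walk.cons haj Walk.nil))
    have hpos : 0 < (Gss TA).dist i j := (gss_connected ⟨a, ha⟩).pos_dist_of_ne hij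
    have hne : (Gss TA).dist i j ≠ 1 := fun h =>
      hmem.1 ((gss_adj.mp (dist_eq_one_iff_adj.mp h)).2.resolve_right hmem.2)
    omega

omit [Fintype V] in
theorem pairCost_gss (hTA : TA.Nonempty) {i j : V} (hij : i ≠ j) :
    pairCost TA A cA cB (Gss TA) i j
      = if i ∈ TA ∨ j ∈ TA then (if i ∈ TA then cA else cB) + (if j ∈ TA then A else 1)
        else 2 := by
  rw [pairCost, gss_dist hTA hij]
  simp only [gss_adj, hij, ne_eq, not_false_eq_true, true_and]
  split_ifs <;> simp_all

omit [Fintype V] in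
theorem pairCost_gss_add_le (hTA : TA.Nonempty) (hA : 0 ≤ A) (hcAA : cA ≤ A) (hcB : 1 ≤ cB)
    (hsum : cA + cB ≤ A + 1) {G : SimpleGraph V} (hG : G.Connected) (i j : V) :
    pairCost TA A cA cB (Gss TA) i j + pairCost TA A cA cB (Gss TA) j i
      ≤ pairCost TA A cA cB G i j + pairCost TA A cA cB G j i := by
  rcases eq_or_ne i j with rfl | hij
  · simp only [pairCost_self, le_refl]
  rw [pairCost_gss hTA hij, pairCost_gss hTA hij.symm]
  simp only [pairCost, G.adj_comm j i, dist_comm (u := j)]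
  by_cases hadj : G.Adj i j
  · have hd : G.dist i j = 1 := dist_eq_one_iff_adj.mpr hadj
    by_cases hi : i ∈ TA <;> by_cases hj : j ∈ TA <;> simp [hi, hj, hadj, hd]
    linarith
  · have hd : (2 : ℝ) ≤ G.dist i j := by
      have hpos := hG.pos_dist_of_ne hij
      have hne : G.dist i j ≠ 1 := fun h => hadj (dist_eq_one_iff_adj.mp h)
      exact_mod_cast (show 2 ≤ G.dist i j by omega)
    by_cases hi : i ∈ TA <;> by_cases hj : j ∈ TA <;> simp [hi, hj, hadj] <;> nlinarith

theorem sum_pairCost_gss (hTA : TA.Nonempty) (i : V) :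
    ∑ j, pairCost TA A cA cB (Gss TA) i j
      = if i ∈ TA then (TA.card - 1) * (cA + A) + TAᶜ.card * (cA + 1)
        else TA.card * (cB + A) + (TAᶜ.card - 1) * 2 := by
  have offDiag : ∀ j ∈ Finset.univ.erase i, pairCost TA A cA cB (Gss TA) i j
      = if j ∈ TA then (if i ∈ TA then cA else cB) + A
        else if i ∈ TA then cA + 1 else 2 := fun j hj => by
    rw [pairCost_gss hTA (Finset.ne_of_mem_erase hj).symm]
    by_cases hi : i ∈ TA <;> by_cases hj : j ∈ TA <;> simp [hi, hj]
  rw [← Finset.sum_erase _ (pairCost_self (Gss TA) i), Finset.sum_congr rfl offDiag,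
    Finset.sum_erase_eq_sub (Finset.mem_univ i), Finset.sum_ite_mem_const]
  by_cases hi : i ∈ TA <;> simp [hi] <;> ring

end

theorem stmt7_general (TA : Finset V) (A cA cB c : ℝ)
    (hcA : 1 < cA) (hAB : cA ≤ cB) (hcAA : cA < A)
    (hc : c = (cA + cB) / 2) (hceq : c < (A + 1) / 2)
    (hTA : TA.Nonempty) :
    socialCost TA A cA cB (Gss TA) =
      ENNReal.ofReal
        (2 * (TAᶜ.card : ℝ) *
            ((TAᶜ.card : ℝ) - 1 + ((A + 1) / 2 + c) * (TA.card : ℝ))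
          + (TA.card : ℝ) * ((TA.card : ℝ) - 1) * (cA + A)) ∧
    ∀ G : SimpleGraph V, G.Connected →
      socialCost TA A cA cB (Gss TA) ≤ socialCost TA A cA cB G := by
  have hcA0 : 0 ≤ cA := by linarith
  have hcB0 : 0 ≤ cB := by linarith
  have hA : 0 ≤ A := by linarith
  have hsum : cA + cB ≤ A + 1 := by linarith
  have hGss := socialCost_eq_ofReal (TA := TA) hA hcA0 hcB0 (gss_connected hTA)
  refine ⟨?_, fun G hG => ?_⟩
  · rw [hGss, Finset.sum_congr rfl fun i _ => sum_pairCost_gss hTA i, Finset.sum_ite_mem_const,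
      hc, nsmul_eq_mul, nsmul_eq_mul]
    congr 1
    ring
  · rw [hGss, socialCost_eq_ofReal hA hcA0 hcB0 hG]
    exact ENNReal.ofReal_le_ofReal <| Finset.sum_sum_le_of_symm_le
      (pairCost_gss_add_le hTA hA hcAA.le (by linarith) hsum hG)

/-- Assuming `1 < c_A ≤ c_B`, `c_A < A` and `(A+1)/2 > c`, the graph
`G**` (T_A a clique, every type-B node adjacent to every type-A node, no B–B edges)
has social cost `2|T_B|(|T_B| - 1 + ((A+1)/2 + c)|T_A|) + |T_A|(|T_A| - 1)(c_A + A)`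
and minimizes the social cost among all connected graphs on `V`. -/
theorem stmt7 (TA : Finset V) (A cA cB c : ℝ)
    (hA : 1 < A) (hcA : 1 < cA) (hAB : cA ≤ cB) (hcAA : cA < A)
    (hc : c = (cA + cB) / 2) (hceq : c < (A + 1) / 2)
    (hTA : TA.Nonempty) :
    socialCost TA A cA cB (Gss TA) =
      ENNReal.ofReal
        (2 * (TAᶜ.card : ℝ) *
            ((TAᶜ.card : ℝ) - 1 + ((A + 1) / 2 + c) * (TA.card : ℝ))
          + (TA.card : ℝ) * ((TA.card : ℝ) - 1) * (cA + A)) ∧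
    ∀ G : SimpleGraph V, G.Connected →
      socialCost TA A cA cB (Gss TA) ≤ socialCost TA A cA cB G :=
  stmt7_general TA A cA cB c hcA hAB hcAA hc hceq hTA

end
end
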